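/- For every n ≥ 1 with 2^{k-1} < n ≤ 2^k (k ≥ 1), the initial non-repetitive complexity of the Thue–Morse word satisfies inrc_m(n) = 3·2^{k-1}. -/

import Mathlib

/-! The word `tm` is the fixed point of `0 ↦ 01, 1 ↦ 10`, so `tm (2t + r) = tm t + r mod 2`.
Factors of length at least 4 occur only at positions of a fixed parity (otherwise desubstitution
would produce a cube `aaa`), hence two equal factors of length `2L + 1` can be desubstituted to
equal factors of length `L + 1` at half the positions. Iterating from the base cases of lengths
2 and 3 shows that the factors of length `2^k + 1` at positions `< 3·2^k` are pairwise distinct.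
Conversely `tm` restricted to `[3·2^k, 3·2^k + 2^(k+1))` coincides with its prefix of length
`2^(k+1)`: the digit sum of `3·2^k + d` is that of `d` plus 2 if `d < 2^k`, and equal to it if
`2^k ≤ d < 2^(k+1)`. -/

/-- The Thue–Morse word: `tm i` is the parity of the binary digit sum of `i`. -/
def tm (i : ℕ) : ℕ := (Nat.digits 2 i).sum % 2

/-- The set of `m` such that the first `m` length-`n` factors of `x`
(starting at positions 0, …, m−1) are pairwise distinct.  The initial
non-repetitive complexity `inrc x n` is the greatest element of this set. -/
def inrcSet {α : Type*} (x : ℕ → α) (n : ℕ) : Set ℕ :=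
  {m | ∀ i < m, ∀ j < m, (∀ d < n, x (i + d) = x (j + d)) → i = j}

section inrcSet

variable {α : Type*} {x : ℕ → α} {n m : ℕ}

lemma mem_inrcSet_of_lt
    (h : ∀ j < m, ∀ i < j, ¬ ∀ d < n, x (i + d) = x (j + d)) : m ∈ inrcSet x n := by
  intro i hi j hj hij
  by_contra hne
  rcases Nat.lt_or_gt_of_ne hne with hlt | hgt
  · exact h j hj i hlt hij
  · exact h i hi j hgt fun d hd => (hij d hd).symm

lemma le_of_mem_inrcSet_of_prefix_eq {p : ℕ} (hp : 0 < p) (h : ∀ d < n, x d = x (p + d))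
    (hm : m ∈ inrcSet x n) : m ≤ p := by
  by_contra! hpm
  exact hp.ne (hm 0 (by omega) p hpm (by simpa using h))

end inrcSet

lemma tm_lt_two (t : ℕ) : tm t < 2 := Nat.mod_lt _ two_pos

lemma tm_two_mul_add (t : ℕ) {r : ℕ} (hr : r < 2) : tm (2 * t + r) = (r + tm t) % 2 := by
  rcases Nat.eq_zero_or_pos t with rfl | ht
  · interval_cases r <;> decide
  · rw [tm, add_comm, Nat.digits_add 2 one_lt_two r t hr (Or.inr ht.ne'), List.sum_cons,
      Nat.add_mod, tm, Nat.mod_eq_of_lt hr]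

lemma tm_two_mul_add_eq_iff (s t : ℕ) {r : ℕ} (hr : r < 2) :
    tm (2 * s + r) = tm (2 * t + r) ↔ tm s = tm t := by
  rw [tm_two_mul_add s hr, tm_two_mul_add t hr]
  have := tm_lt_two s
  have := tm_lt_two t
  omega

lemma tm_two_mul_ne (s : ℕ) : tm (2 * s) ≠ tm (2 * s + 1) := by
  have h0 := tm_two_mul_add s zero_lt_two
  have h1 := tm_two_mul_add s one_lt_two
  have := tm_lt_two s
  simp only [add_zero] at h0
  omega

lemma not_tm_cube (t : ℕ) : ¬ (tm t = tm (t + 1) ∧ tm (t + 1) = tm (t + 2)) := by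
  rintro ⟨h₁, h₂⟩
  obtain ⟨s, rfl | rfl⟩ := Nat.even_or_odd' t
  · exact tm_two_mul_ne s h₁
  · exact tm_two_mul_ne (s + 1) h₂

lemma not_tm_factor_four_eq_even_odd (a b : ℕ) :
    ¬ ∀ d < 4, tm (2 * a + d) = tm (2 * b + 1 + d) := by
  intro h
  have desubst (s : ℕ) (hs : tm (2 * s + 1) ≠ tm (2 * (s + 1))) : tm s = tm (s + 1) := by
    rw [tm_two_mul_add s one_lt_two, ← add_zero (2 * (s + 1)), tm_two_mul_add _ two_pos] at hs
    have := tm_lt_two s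
    have := tm_lt_two (s + 1)
    omega
  -- the letters at `2a, 2a + 1` and at `2a + 2, 2a + 3` differ; transported to `2b + 1, …`
  -- this forces the cube `tm b = tm (b + 1) = tm (b + 2)`
  refine not_tm_cube b ⟨desubst b ?_, desubst (b + 1) ?_⟩
  · have h0 : tm (2 * a) = tm (2 * b + 1) := h 0 (by norm_num)
    have h1 : tm (2 * a + 1) = tm (2 * (b + 1)) := h 1 (by norm_num)
    rw [← h0, ← h1]
    exact tm_two_mul_ne a
  · have h2 : tm (2 * (a + 1)) = tm (2 * (b + 1) + 1) := h 2 (by norm_num)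
    have h3 : tm (2 * (a + 1) + 1) = tm (2 * (b + 1 + 1)) := h 3 (by norm_num)
    rw [← h2, ← h3]
    exact tm_two_mul_ne (a + 1)

lemma mod_two_eq_of_tm_factor_four_eq {i j : ℕ} (h : ∀ d < 4, tm (i + d) = tm (j + d)) :
    i % 2 = j % 2 := by
  by_contra hne
  obtain ⟨a, ha | ha⟩ := Nat.even_or_odd' i <;> obtain ⟨b, hb | hb⟩ := Nat.even_or_odd' j <;>
    subst ha hb
  · omega
  · exact not_tm_factor_four_eq_even_odd a b h
  · exact not_tm_factor_four_eq_even_odd b a fun d hd => (h d hd).symm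
  · omega

lemma tm_factor_eq_div_two {i j L : ℕ} (hij : i % 2 = j % 2)
    (h : ∀ d ≤ 2 * L, tm (i + d) = tm (j + d)) : ∀ d ≤ L, tm (i / 2 + d) = tm (j / 2 + d) := by
  intro d hd
  have := h (2 * d) (by omega)
  rwa [show i + 2 * d = 2 * (i / 2 + d) + i % 2 by omega,
    show j + 2 * d = 2 * (j / 2 + d) + i % 2 by omega,
    tm_two_mul_add_eq_iff _ _ (Nat.mod_lt _ two_pos)] at this

lemma tm_factor_ne : ∀ (k : ℕ), ∀ j < 3 * 2 ^ k, ∀ i < j,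
    ¬ ∀ d ≤ 2 ^ k, tm (i + d) = tm (j + d)
  | 0 => by decide
  | 1 => by decide
  | k + 2 => fun j hj i hij h => by
    have hpow : 2 ^ (k + 2) = 2 * 2 ^ (k + 1) := by ring
    have hpos : 0 < 2 ^ (k + 1) := by positivity
    have hpar := mod_two_eq_of_tm_factor_four_eq fun d hd => h d (by omega)
    exact tm_factor_ne (k + 1) (j / 2) (by omega) (i / 2) (by omega)
      (tm_factor_eq_div_two hpar (hpow ▸ h))

lemma tm_add_two_pow_mul : ∀ (j : ℕ) {a : ℕ} (m : ℕ), a < 2 ^ j →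
    tm (a + 2 ^ j * m) = (tm a + tm m) % 2
  | 0, a, m, ha => by
    obtain rfl : a = 0 := by simpa using ha
    simp [show tm 0 = 0 by decide, Nat.mod_eq_of_lt (tm_lt_two m)]
  | j + 1, a, m, ha => by
    have hr : a % 2 < 2 := Nat.mod_lt _ two_pos
    have ih := tm_add_two_pow_mul j m (show a / 2 < 2 ^ j by rw [pow_succ] at ha; omega)
    have split : a + 2 ^ (j + 1) * m = 2 * (a / 2 + 2 ^ j * m) + a % 2 := by
      rw [pow_succ]; ring_nf; omega
    rw [split, tm_two_mul_add _ hr, ih]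
    conv_rhs => rw [← Nat.div_add_mod a 2, tm_two_mul_add _ hr]
    omega

lemma tm_three_mul_two_pow_add (k : ℕ) {d : ℕ} (hd : d < 2 ^ (k + 1)) :
    tm (3 * 2 ^ k + d) = tm d := by
  rw [pow_succ] at hd
  rcases lt_or_ge d (2 ^ k) with h | h
  · rw [show 3 * 2 ^ k + d = d + 2 ^ k * 3 by ring, tm_add_two_pow_mul k 3 h,
      show tm 3 = 0 by decide, add_zero, Nat.mod_eq_of_lt (tm_lt_two d)]
  · obtain ⟨e, rfl⟩ := Nat.exists_eq_add_of_le h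
    have he : e < 2 ^ k := by omega
    rw [show 3 * 2 ^ k + (2 ^ k + e) = e + 2 ^ k * 4 by ring,
      show 2 ^ k + e = e + 2 ^ k * 1 by ring, tm_add_two_pow_mul k 4 he,
      tm_add_two_pow_mul k 1 he, show tm 4 = tm 1 by decide]

theorem inrc_thueMorse (k n : ℕ) (hk : 1 ≤ k) (hn1 : 2 ^ (k - 1) < n)
    (hn2 : n ≤ 2 ^ k) :
    IsGreatest (inrcSet tm n) (3 * 2 ^ (k - 1)) := by
  obtain ⟨k, rfl⟩ := Nat.exists_eq_add_of_le' hk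
  rw [Nat.add_sub_cancel] at hn1 ⊢
  refine ⟨mem_inrcSet_of_lt fun j hj i hij h => tm_factor_ne k j hj i hij fun d hd => h d ?_,
    fun m hm => le_of_mem_inrcSet_of_prefix_eq (by positivity) (fun d hd => ?_) hm⟩
  · omega
  · exact (tm_three_mul_two_pow_add k (by omega)).symm
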